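/- With T,R,S,M as in the dumbbell construction (r,s odd, ℓ≥2 even), for every u>0 we have R(u)S(u) − M(u)T(u) > 0, provided f_{r-1}(u)>0 and f_{s-1}(u)>0; in particular the sign of R(u)S(u)−M(u)T(u) equals (−1)^ℓ. -/
import Mathlib


/-- `fib u j` represents `f_{j-1}(u)`: `f_{-1}=0`, `f_0=1`, `f_j=f_{j-1}+u·f_{j-2}`. -/
def fib (u : ℝ) : ℕ → ℝ
  | 0 => 0
  | 1 => 1
  | (j + 2) => fib u (j + 1) + u * fib u j

/-- `g_j(u) = f_j(u) + u·f_{j-2}(u)`. -/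
def gpoly (u : ℝ) (j : ℕ) : ℝ := fib u (j + 1) + u * fib u (j - 1)

lemma fib_catalan (u : ℝ) : ∀ n : ℕ,
    fib u (n+1) ^ 2 - fib u (n+2) * fib u n = (-1 : ℝ) ^ n * u ^ n := by
  intro n
  induction n with
  | zero => simp [fib]
  | succ k ih =>
    have h3 : fib u (k+3) = fib u (k+2) + u * fib u (k+1) := rfl
    have h2 : fib u (k+2) = fib u (k+1) + u * fib u k := rfl
    show fib u (k+2) ^ 2 - fib u (k+3) * fib u (k+1) = _
    rw [h3, pow_succ, pow_succ]
    linear_combination (-u) * ih + fib u (k+2) * h2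
  
/-- For r, s odd, ℓ ≥ 2 even, u > 0 with f_{r-1}(u)>0 and f_{s-1}(u)>0,
we have R·S − M·T > 0, and its sign equals (−1)^ℓ. -/
theorem dumbbell_RS_sub_MT_pos (r s ℓ : ℕ) (hr : Odd r) (hs : Odd s)
    (hℓ : 2 ≤ ℓ) (hℓe : Even ℓ) (u : ℝ) (hu : 0 < u)
    (hfr : 0 < fib u r) (hfs : 0 < fib u s) :
    let f : ℕ → ℝ := fun j => fib u (j + 1)
    let T : ℝ := f (ℓ - 1)
    let R : ℝ := f (ℓ - 1) * gpoly u s + u * f (ℓ - 2) * f (s - 1)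
    let S : ℝ := f (ℓ - 1) * gpoly u r + u * f (ℓ - 2) * f (r - 1)
    let M : ℝ := f (ℓ - 1) * gpoly u r * gpoly u s
      + u * f (ℓ - 2) * (f (r - 1) * gpoly u s + f (s - 1) * gpoly u r)
      + u ^ 2 * fib u (ℓ - 2) * f (r - 1) * f (s - 1)
    0 < R * S - M * T ∧ Real.sign (R * S - M * T) = (-1 : ℝ) ^ ℓ := by
  intro f T R S M
  obtain ⟨n, rfl⟩ : ∃ n, ℓ = n + 2 := ⟨ℓ - 2, by omega⟩
  have hne : Even n := by
    rcases hℓe with ⟨m, hm⟩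
    exact ⟨m - 1, by omega⟩
  obtain ⟨a, rfl⟩ := hr
  obtain ⟨b, rfl⟩ := hs
  have key : R * S - M * T
      = u ^ 2 * fib u (2*a+1) * fib u (2*b+1)
        * (fib u (n+1) ^ 2 - fib u (n+2) * fib u n) := by
    show _ = _
    simp only [T, R, S, M, f]
    rw [show n + 2 - 1 + 1 = n + 2 from by omega,
        show n + 2 - 2 + 1 = n + 1 from by omega,
        show n + 2 - 2 = n from by omega,
        show 2*a+1 - 1 + 1 = 2*a+1 from by omega,
        show 2*b+1 - 1 + 1 = 2*b+1 from by omega]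
    ring
  have hpos : 0 < R * S - M * T := by
    rw [key, fib_catalan, hne.neg_one_pow, one_mul]
    have h1 : 0 < fib u (2*a+1) := hfr
    have h2 : 0 < fib u (2*b+1) := hfs
    positivity
  exact ⟨hpos, by rw [Real.sign_of_pos hpos, hℓe.neg_one_pow]⟩
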